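/- arXiv:2101.06015 — 5 statements merged into one kernel-verified Lean document; each statement's English description precedes it below -/
import Mathlib

section
/- Every process or receive transition strictly decreases the weight wt(s) = Σ_{c ∈ C} N(c, π_c(s)) of the state: if s →_p s' or s →_r s', then wt(s') < wt(s). -/
structure PSN where
  Node : Type
  Chan : Type
  fintypeNode : Fintype Node
  decEqNode : DecidableEq Node
  fintypeChan : Fintype Chan
  decEqChan : DecidableEq Chan
  M : Finset Node
  hM : 2 ≤ M.card
  source : Chan → Node
  target : Chan → Node
  rout : Node → Node → Chan
  rout_source : ∀ n m, m ∈ M → m ≠ n → source (rout n m) = n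

attribute [instance] PSN.fintypeNode PSN.decEqNode PSN.fintypeChan PSN.decEqChan

namespace PSN

variable (P : PSN)

/-- A state records the content of every channel: `none` is an empty channel,
`some m` is a message destined for terminal `m`. -/
abbrev State := P.Chan → Option P.Node

/-- The next hop of a message destined for `m` at node `n`. -/
def nexthop (m n : P.Node) : P.Node := P.target (P.rout n m)

/-- The next channel for a message destined for `m` currently in channel `c`. -/
def nextC (m : P.Node) (c : P.Chan) : P.Chan := P.rout (P.target c) m

/-- The network is correct: every message can reach its destination in a
bounded number of hops. -/
def Correct : Prop := ∀ m ∈ P.M, ∀ n : P.Node, ∃ k : ℕ, (P.nexthop m)^[k] n = m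

/-- Initial states: all channels empty. -/
def init (s : P.State) : Prop := ∀ c, s c = none

/-- Send step: terminal `m` inserts a message for terminal `m' ≠ m` into the
(currently empty) channel `rout m m'`. -/
def sendStep (s s' : P.State) : Prop :=
  ∃ m m', m ∈ P.M ∧ m' ∈ P.M ∧ m ≠ m' ∧ s (P.rout m m') = none ∧
    s' = Function.update s (P.rout m m') (some m')

/-- Process step: a node forwards a message `m` from an incoming channel `c`
(with `target c ≠ m`) to the routed outgoing channel, provided it is empty. -/
def procStep (s s' : P.State) : Prop :=
  ∃ m c, m ∈ P.M ∧ s c = some m ∧ P.target c ≠ m ∧ s (P.nextC m c) = none ∧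
    s' = Function.update (Function.update s c none) (P.nextC m c) (some m)

/-- Receive step: terminal `m` removes a message destined for it from an
incoming channel. -/
def recvStep (s s' : P.State) : Prop :=
  ∃ m c, m ∈ P.M ∧ s c = some m ∧ P.target c = m ∧ s' = Function.update s c none

/-- Send, process or receive transitions. -/
def stepSPR (s s' : P.State) : Prop := P.sendStep s s' ∨ P.procStep s s' ∨ P.recvStep s s'

/-- Process or receive transitions. -/
def stepPR (s s' : P.State) : Prop := P.procStep s s' ∨ P.recvStep s s'

/-- The (total) transition relation of the Kripke structure: send, process and
receive steps, plus self-loops on otherwise-stuck states. -/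
def step (s s' : P.State) : Prop := P.stepSPR s s' ∨ (s = s' ∧ ∀ t, ¬ P.stepSPR s t)

/-- Reachable states: reachable from an initial state. -/
def reachable (s : P.State) : Prop := ∃ s₀, P.init s₀ ∧ Relation.ReflTransGen P.step s₀ s

/-- Global deadlock: no transition to a distinct state. -/
def globalDeadlock (s : P.State) : Prop := ∀ s', P.step s s' → s' = s

/-- Local deadlock at channel `c`: `c` is nonempty and keeps the same content
along every execution. -/
def localDeadlockAt (c : P.Chan) (s : P.State) : Prop :=
  ∀ s', Relation.ReflTransGen P.step s s' → s c ≠ none ∧ s' c = s c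

/-- Local deadlock: some channel is locally deadlocked. -/
def localDeadlock (s : P.State) : Prop := ∃ c, P.localDeadlockAt c s

/-- Weak deadlock: a non-initial state with no process or receive step. -/
def weakDeadlock (s : P.State) : Prop := ¬ P.init s ∧ ∀ s', ¬ P.stepPR s s'

/-- `Nval c v` is the number of hops needed for the content `v` of channel `c`
to reach its destination: `0` for the empty channel, and for a message `m`
one more than the least `l` with `target (nextC m ^[l] c) = m`. -/
noncomputable def Nval (c : P.Chan) : Option P.Node → ℕ
  | none => 0
  | some m => sInf {l | P.target ((P.nextC m)^[l] c) = m} + 1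

/-- The weight of a state: total number of hops needed for all messages
currently in the network to reach their destinations. -/
noncomputable def wt (s : P.State) : ℕ := ∑ c : P.Chan, P.Nval c (s c)

end PSN

/-!
A process step moves a message `m` from `c` into the empty channel `nextC m c`. Correctness makes
the infimum defining `N(c, m)` range over a nonempty set, so `N(c, m) = N(nextC m c, m) + 1` and
the weight drops by one.
A receive step empties a channel holding a message, whose hop count is positive.
-/

namespace PSN

variable (P : PSN)

@[simp]
lemma Nval_none (c : P.Chan) : P.Nval c none = 0 := rfl

lemma Nval_some_pos (c : P.Chan) (m : P.Node) : 0 < P.Nval c (some m) := Nat.succ_pos _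

lemma target_iterate_nextC (m : P.Node) (c : P.Chan) (l : ℕ) :
    P.target ((P.nextC m)^[l] c) = (P.nexthop m)^[l] (P.target c) := by
  induction l with
  | zero => rfl
  | succ l ih => rw [Function.iterate_succ_apply', Function.iterate_succ_apply', ← ih]; rfl

variable {P} in
lemma Correct.exists_target_iterate_nextC_eq (hc : P.Correct) {m : P.Node} (hm : m ∈ P.M)
    (c : P.Chan) : ∃ l, P.target ((P.nextC m)^[l] c) = m := by
  simpa only [target_iterate_nextC] using hc m hm (P.target c)

lemma Nval_some_eq_Nval_nextC_add_one {m : P.Node} {c : P.Chan}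
    (hreach : ∃ l, P.target ((P.nextC m)^[l] c) = m) (htarget : P.target c ≠ m) :
    P.Nval c (some m) = P.Nval (P.nextC m c) (some m) + 1 := by
  have hpos : 1 ≤ sInf {l | P.target ((P.nextC m)^[l] c) = m} := by
    refine Nat.pos_of_ne_zero fun h0 => htarget ?_
    have h0mem := Nat.sInf_mem (s := {l | P.target ((P.nextC m)^[l] c) = m}) hreach
    rwa [h0] at h0mem
  simp only [Nval, ← Nat.sInf_add hpos, Function.iterate_succ_apply]

lemma wt_update_add (s : P.State) (c : P.Chan) (v : Option P.Node) :
    P.wt (Function.update s c v) + P.Nval c (s c) = P.wt s + P.Nval c v := by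
  have hs := Finset.add_sum_erase Finset.univ (fun d => P.Nval d (s d)) (Finset.mem_univ c)
  rw [wt, wt, ← hs]
  simp only [Function.apply_update (fun d => P.Nval d) s c v,
    Finset.sum_update_of_mem (Finset.mem_univ c), Finset.sdiff_singleton_eq_erase]
  ring

end PSN

/-- Every process or receive transition strictly decreases the weight of the
state. -/
theorem stmt7 (P : PSN) (hc : P.Correct) (s s' : P.State)
    (h : P.procStep s s' ∨ P.recvStep s s') :
    P.wt s' < P.wt s := by
  rcases h with ⟨m, c, hm, hsc, htc, hfree, rfl⟩ | ⟨m, c, -, hsc, -, rfl⟩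
  · have hne : P.nextC m c ≠ c := fun h => by simp [h, hsc] at hfree
    have hin := P.wt_update_add (Function.update s c none) (P.nextC m c) (some m)
    have hout := P.wt_update_add s c none
    have hhop := P.Nval_some_eq_Nval_nextC_add_one (hc.exists_target_iterate_nextC_eq hm c) htc
    simp only [Function.update_of_ne hne, hfree, hsc, PSN.Nval_none] at hin hout
    omega
  · have hout := P.wt_update_add s c none
    have hpos := P.Nval_some_pos c m
    simp only [hsc, PSN.Nval_none] at hout
    omega
end

section
/- In a correct packet switching network, every weak deadlock is a local deadlock: W(K) ⊆ L(K). More precisely, if s ∉ I and no process or receive step is enabled in s, then for every nonempty channel c in s, s ∈ L_c(K). -/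
/-! A weak deadlock can only be left by send steps, and a send step only fills an empty channel.
So every message of a weak deadlock stays put: it cannot be received, and the channel it must be
forwarded to is itself occupied by a message that stays put. -/

namespace PSN

variable {P : PSN} {s t u : P.State} {c : P.Chan}

theorem sendStep.apply_eq (h : P.sendStep t u) (hc : t c ≠ none) : u c = t c := by
  obtain ⟨m, m', -, -, -, hempty, rfl⟩ := h
  have : c ≠ P.rout m m' := by rintro rfl; exact hc hempty
  exact Function.update_of_ne this _ _

theorem procStep.apply_eq_or (h : P.procStep t u) (hc : t c ≠ none) :
    u c = t c ∨ ∃ m ∈ P.M, t c = some m ∧ P.target c ≠ m ∧ t (P.nextC m c) = none := by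
  obtain ⟨m, c', hm, hc', htarget, hempty, rfl⟩ := h
  by_cases hcc' : c = c'
  · subst hcc'
    exact Or.inr ⟨m, hm, hc', htarget, hempty⟩
  · have : c ≠ P.nextC m c' := by rintro rfl; exact hc hempty
    left
    rw [Function.update_of_ne this, Function.update_of_ne hcc']

theorem recvStep.apply_eq_or (h : P.recvStep t u) :
    u c = t c ∨ ∃ m ∈ P.M, t c = some m ∧ P.target c = m := by
  obtain ⟨m, c', hm, hc', htarget, rfl⟩ := h
  by_cases hcc' : c = c'
  · subst hcc'
    exact Or.inr ⟨m, hm, hc', htarget⟩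
  · exact Or.inl (Function.update_of_ne hcc' _ _)

theorem step.apply_eq_or (h : P.step t u) (hc : t c ≠ none) :
    u c = t c ∨ ∃ m ∈ P.M, t c = some m ∧ (P.target c = m ∨ t (P.nextC m c) = none) := by
  rcases h with (hsend | hproc | hrecv) | ⟨rfl, -⟩
  · exact Or.inl (hsend.apply_eq hc)
  · rcases hproc.apply_eq_or hc with h | ⟨m, hm, hcm, -, hempty⟩
    exacts [Or.inl h, Or.inr ⟨m, hm, hcm, Or.inr hempty⟩]
  · rcases hrecv.apply_eq_or with h | ⟨m, hm, hcm, htarget⟩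
    exacts [Or.inl h, Or.inr ⟨m, hm, hcm, Or.inl htarget⟩]
  · exact Or.inl rfl

theorem weakDeadlock.target_ne (hs : P.weakDeadlock s) {m : P.Node} (hm : m ∈ P.M)
    (hcm : s c = some m) : P.target c ≠ m :=
  fun htarget ↦ hs.2 _ (Or.inr ⟨m, c, hm, hcm, htarget, rfl⟩)

theorem weakDeadlock.nextC_ne_none (hs : P.weakDeadlock s) {m : P.Node} (hm : m ∈ P.M)
    (hcm : s c = some m) : s (P.nextC m c) ≠ none :=
  fun hempty ↦ hs.2 _ (Or.inl ⟨m, c, hm, hcm, hs.target_ne hm hcm, hempty, rfl⟩)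

theorem weakDeadlock.apply_eq_of_reflTransGen (hs : P.weakDeadlock s)
    (h : Relation.ReflTransGen P.step s t) (hc : s c ≠ none) : t c = s c := by
  induction h generalizing c with
  | refl => rfl
  | tail _ hstep ih =>
    rcases hstep.apply_eq_or (c := c) (by rwa [ih hc]) with h | ⟨m, hm, hcm, hmove⟩
    · rw [h, ih hc]
    · rw [ih hc] at hcm
      have hnext := hs.nextC_ne_none hm hcm
      rcases hmove with htarget | hempty
      · exact absurd htarget (hs.target_ne hm hcm)
      · exact absurd (ih hnext ▸ hempty) hnext

theorem weakDeadlock.localDeadlockAt (hs : P.weakDeadlock s) (hc : s c ≠ none) :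
    P.localDeadlockAt c s :=
  fun _ h ↦ ⟨hc, hs.apply_eq_of_reflTransGen h hc⟩

end PSN

theorem stmt9_general (P : PSN) (s : P.State) (hs : P.weakDeadlock s) :
    P.localDeadlock s ∧ ∀ c, s c ≠ none → P.localDeadlockAt c s := by
  obtain ⟨c, hc⟩ : ∃ c, s c ≠ none := by simpa [PSN.init] using hs.1
  exact ⟨⟨c, hs.localDeadlockAt hc⟩, fun _ ↦ hs.localDeadlockAt⟩

/-- Every weak deadlock is a local deadlock: W(K) ⊆ L(K); more precisely,
every nonempty channel of a weak deadlock state is locally deadlocked. -/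
theorem stmt9 (P : PSN) (hc : P.Correct) (s : P.State) (hs : P.weakDeadlock s) :
    P.localDeadlock s ∧ ∀ c, s c ≠ none → P.localDeadlockAt c s :=
  stmt9_general P s hs
end

section
/- There exists a correct packet switching network and a reachable state of it that is a local deadlock but not a weak deadlock. -/
/-! In the witness, each ring channel `cᵢ` holds a message for the node two hops ahead, so
it waits for `cᵢ₊₁`, which is full as well. This cyclic wait is never broken: sends only fill
empty channels, and no message in the cycle is at its destination. The chord `c₅` holds a
message for its target node, which can receive it, so the state is not a weak deadlock. -/

namespace PSN

variable (P : PSN)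

def IsBlocked (S : Set P.Chan) (s : P.State) : Prop :=
  ∀ c ∈ S, ∃ m, s c = some m ∧ P.target c ≠ m ∧ P.nextC m c ∈ S

variable {P} {S : Set P.Chan} {s s' : P.State}

lemma IsBlocked.ne_none (h : P.IsBlocked S s) {c : P.Chan} (hc : c ∈ S) : s c ≠ none := by
  obtain ⟨m, hm, -⟩ := h c hc
  simp [hm]

lemma IsBlocked.eqOn_of_step (h : P.IsBlocked S s)
    (hs : P.step s s') : S.EqOn s' s := by
  intro c hc
  rcases hs with (⟨m, m', -, -, -, hempty, rfl⟩ | ⟨m, d, -, hd, -, hnext, rfl⟩ |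
    ⟨m, d, -, hd, htarget, rfl⟩) | ⟨rfl, -⟩
  · have hcr : c ≠ P.rout m m' := fun hcr => h.ne_none hc (hcr ▸ hempty)
    exact Function.update_of_ne hcr _ _
  · have hdS : d ∉ S := fun hdS => by
      obtain ⟨m', hm', -, hnextS⟩ := h d hdS
      obtain rfl : m = m' := Option.some_injective _ (hd.symm.trans hm')
      exact h.ne_none hnextS hnext
    have hcd : c ≠ d := fun hcd => hdS (hcd ▸ hc)
    have hcnext : c ≠ P.nextC m d := fun hcn => h.ne_none hc (hcn ▸ hnext)
    rw [Function.update_of_ne hcnext, Function.update_of_ne hcd]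
  · have hcd : c ≠ d := by
      rintro rfl
      obtain ⟨m', hm', hne, -⟩ := h c hc
      exact hne (htarget.trans (Option.some_injective _ (hd.symm.trans hm')))
    exact Function.update_of_ne hcd _ _
  · rfl

lemma IsBlocked.of_eqOn (h : P.IsBlocked S s)
    (heq : S.EqOn s' s) : P.IsBlocked S s' := fun c hc => heq hc ▸ h c hc

lemma IsBlocked.eqOn_of_reflTransGen (h : P.IsBlocked S s)
    (hs : Relation.ReflTransGen P.step s s') : S.EqOn s' s := by
  induction hs with
  | refl => exact fun _ _ => rfl
  | tail _ hstep ih => exact ((h.of_eqOn ih).eqOn_of_step hstep).trans ih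

theorem IsBlocked.localDeadlockAt (h : P.IsBlocked S s)
    {c : P.Chan} (hc : c ∈ S) : P.localDeadlockAt c s :=
  fun _ hs => ⟨h.ne_none hc, h.eqOn_of_reflTransGen hs hc⟩

lemma step_update_of_send {m m' : P.Node} (hm : m ∈ P.M) (hm' : m' ∈ P.M)
    (hne : m ≠ m') (hempty : s (P.rout m m') = none) :
    P.step s (Function.update s (P.rout m m') (some m')) :=
  Or.inl (Or.inl ⟨m, m', hm, hm', hne, hempty, rfl⟩)

end PSN

-- Node `i` and channel `cᵢ` are indexed by `i - 1`.
@[reducible] def ringWithChord : PSN where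
  Node := Fin 4
  Chan := Fin 5
  fintypeNode := inferInstance
  decEqNode := inferInstance
  fintypeChan := inferInstance
  decEqChan := inferInstance
  M := Finset.univ
  hM := by decide
  source := ![0, 1, 2, 3, 1]
  target := ![1, 2, 3, 0, 0]
  rout := fun n m => if n = 1 ∧ m = 0 then 4 else n.castSucc
  rout_source := by decide

namespace ringWithChord

open Function PSN

lemma correct : ringWithChord.Correct := by
  have h : ∀ m n : Fin 4, ∃ k : Fin 4, (ringWithChord.nexthop m)^[k.1] n = m := by decide
  intro m _ n
  obtain ⟨k, hk⟩ := h m n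
  exact ⟨k, hk⟩

def deadState : ringWithChord.State :=
  ![some 2, some 3, some 0, some 1, some 0]

lemma deadState_reachable : ringWithChord.reachable deadState := by
  have hsends : deadState = update (update (update (update (update (fun _ => none)
      (ringWithChord.rout 0 2) (some 2)) (ringWithChord.rout 1 3) (some 3))
      (ringWithChord.rout 2 0) (some 0)) (ringWithChord.rout 3 1) (some 1))
      (ringWithChord.rout 1 0) (some 0) := by
    decide
  have send {s : ringWithChord.State} {m m' : Fin 4} (hne : m ≠ m')
      (hempty : s (ringWithChord.rout m m') = none) :=
    step_update_of_send (Finset.mem_univ m) (Finset.mem_univ m') hne hempty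
  refine ⟨fun _ => none, fun _ => rfl, hsends ▸ ?_⟩
  exact .tail (.tail (.tail (.tail (.single (send (by decide) rfl))
    (send (by decide) (by decide))) (send (by decide) (by decide)))
    (send (by decide) (by decide))) (send (by decide) (by decide))

lemma deadState_isBlocked_ring :
    ringWithChord.IsBlocked ({0, 1, 2, 3} : Finset (Fin 5)) deadState := by
  simp only [PSN.IsBlocked, Finset.coe_insert, Finset.coe_singleton, Set.mem_insert_iff,
    Set.mem_singleton_iff]
  decide

lemma deadState_recvStep : ringWithChord.recvStep deadState (update deadState 4 none) :=
  ⟨0, 4, Finset.mem_univ _, rfl, rfl, rfl⟩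

end ringWithChord

/-- There is a correct packet switching network with a reachable state that is
a local deadlock but not a weak deadlock. -/
theorem stmt14 :
    ∃ P : PSN, P.Correct ∧ ∃ s : P.State,
      P.reachable s ∧ P.localDeadlock s ∧ ¬ P.weakDeadlock s := by
  refine ⟨ringWithChord, ringWithChord.correct, ringWithChord.deadState,
    ringWithChord.deadState_reachable, ⟨0, ?_⟩, fun ⟨_, hstuck⟩ => ?_⟩
  · exact ringWithChord.deadState_isBlocked_ring.localDeadlockAt (by decide)
  · exact hstuck _ (Or.inr ringWithChord.deadState_recvStep)
end

section
/- There exists a correct packet switching network and a reachable state of it that is a weak deadlock but not a global deadlock. -/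
/-!
In the four-cycle 1 → 2 → 3 → 4 → 1, put into each ring channel a message addressed to the
node after its target. Every message then waits for the next ring channel, which is full, so no
process or receive step is possible. The extra channel c5 from 2 to 1 carries only messages
from 2 to 1 and stays empty, so node 2 can still send.
-/

namespace PSN

variable {P : PSN} {s s' : P.State}

theorem step_of_sendStep (h : P.sendStep s s') : P.step s s' :=
  Or.inl (Or.inl h)

theorem sendStep_update {m m' : P.Node} (hm : m ∈ P.M) (hm' : m' ∈ P.M) (hne : m ≠ m')
    (hfree : s (P.rout m m') = none) :
    P.sendStep s (Function.update s (P.rout m m') (some m')) :=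
  ⟨m, m', hm, hm', hne, hfree, rfl⟩

theorem sendStep.ne (h : P.sendStep s s') : s' ≠ s := by
  obtain ⟨m, m', -, -, -, hfree, rfl⟩ := h
  intro heq
  simpa [hfree] using congrFun heq (P.rout m m')

theorem reachable_of_init (h : P.init s) : P.reachable s :=
  ⟨s, h, .refl⟩

theorem reachable.of_sendStep (hs : P.reachable s) (h : P.sendStep s s') : P.reachable s' :=
  let ⟨s₀, h₀, hs₀⟩ := hs
  ⟨s₀, h₀, hs₀.tail (step_of_sendStep h)⟩

theorem not_globalDeadlock_of_sendStep (h : P.sendStep s s') : ¬ P.globalDeadlock s :=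
  fun hdead => h.ne (hdead s' (step_of_sendStep h))

theorem weakDeadlock_of_blocked (hnonempty : ∃ c, s c ≠ none)
    (hblocked : ∀ c m, s c = some m → P.target c ≠ m ∧ s (P.nextC m c) ≠ none) :
    P.weakDeadlock s := by
  refine ⟨fun hinit => ?_, ?_⟩
  · obtain ⟨c, hc⟩ := hnonempty
    exact hc (hinit c)
  · rintro s' (⟨m, c, -, hc, -, hnext, -⟩ | ⟨m, c, -, hc, htarget, -⟩)
    · exact (hblocked c m hc).2 hnext
    · exact (hblocked c m hc).1 htarget

-- Node `i` of the paper is `i - 1 : Fin 4` and channel `cᵢ` is `i - 1 : Fin 5`.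
abbrev ringWithChord : PSN where
  Node := Fin 4
  Chan := Fin 5
  fintypeNode := inferInstance
  decEqNode := inferInstance
  fintypeChan := inferInstance
  decEqChan := inferInstance
  M := Finset.univ
  hM := by decide
  source := ![0, 1, 2, 3, 1]
  target := ![1, 2, 3, 0, 0]
  rout n m := if n = 1 ∧ m = 0 then 4 else n.castSucc
  rout_source := by decide

theorem ringWithChord_correct : ringWithChord.Correct := by
  have hbounded : ∀ m n : Fin 4, ∃ k < 4, (ringWithChord.nexthop m)^[k] n = m := by
    decide
  intro m _ n
  obtain ⟨k, -, hk⟩ := hbounded m n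
  exact ⟨k, hk⟩

def blockedRing : ringWithChord.State :=
  ![some (2 : Fin 4), some (3 : Fin 4), some (0 : Fin 4), some (1 : Fin 4), none]

theorem reachable_blockedRing : ringWithChord.reachable blockedRing := by
  let send (s : ringWithChord.State) (m m' : Fin 4) :=
    Function.update s (ringWithChord.rout m m') (some m')
  have hfill : blockedRing = send (send (send (send (fun _ => none) 0 2) 1 3) 2 0) 3 1 := by
    decide
  rw [hfill]
  refine ((((reachable_of_init fun _ => rfl).of_sendStep (sendStep_update ?_ ?_ ?_ ?_)).of_sendStep
    (sendStep_update ?_ ?_ ?_ ?_)).of_sendStep (sendStep_update ?_ ?_ ?_ ?_)).of_sendStep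
    (sendStep_update ?_ ?_ ?_ ?_)
  all_goals decide

theorem weakDeadlock_blockedRing : ringWithChord.weakDeadlock blockedRing :=
  weakDeadlock_of_blocked ⟨0, by decide⟩ (by decide)

theorem not_globalDeadlock_blockedRing : ¬ ringWithChord.globalDeadlock blockedRing :=
  not_globalDeadlock_of_sendStep (s' := Function.update blockedRing (ringWithChord.rout 1 0) (some 0))
    (sendStep_update (by decide) (by decide) (by decide) (by decide))

end PSN

/-- There is a correct packet switching network with a reachable state that is
a weak deadlock but not a global deadlock. -/
theorem stmt15 :
    ∃ P : PSN, P.Correct ∧ ∃ s : P.State,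
      P.reachable s ∧ P.weakDeadlock s ∧ ¬ P.globalDeadlock s :=
  ⟨PSN.ringWithChord, PSN.ringWithChord_correct, PSN.blockedRing, PSN.reachable_blockedRing,
    PSN.weakDeadlock_blockedRing, PSN.not_globalDeadlock_blockedRing⟩
end

section
/- If in some state s of a packet switching network some channel is nonempty and no process or receive step is enabled, then for every state s' with s →* s', every channel that is nonempty in s has the same content in s'; consequently a weak deadlock persists forever on its blocked channels. -/
/-! The states in which every message of `s` still sits in its channel are closed under steps:
a send or process step fills only a channel that is empty there, hence empty in `s`, and a
message of `s` that is forwarded or received there could already be forwarded or received in `s`. -/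

def PSN.Extends (P : PSN) (s t : P.State) : Prop := ∀ c, s c ≠ none → t c = s c

namespace PSN.Extends

variable {P : PSN} {s t t' : P.State}

theorem apply_eq_none (hst : P.Extends s t) {c : P.Chan} (hc : t c = none) : s c = none := by
  by_contra hs
  exact hs (hst c hs ▸ hc)

theorem sendStep (hst : P.Extends s t) (h : P.sendStep t t') : P.Extends s t' := by
  obtain ⟨m, m', -, -, -, hempty, rfl⟩ := h
  intro d hd
  have hd' : d ≠ P.rout m m' := by
    rintro rfl
    exact hd (hst.apply_eq_none hempty)
  rw [Function.update_of_ne hd', hst d hd]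

theorem procStep (hs : ∀ u, ¬ P.procStep s u) (hst : P.Extends s t) (h : P.procStep t t') :
    P.Extends s t' := by
  obtain ⟨m, c, hm, hc, htg, hnext, rfl⟩ := h
  intro d hd
  have hd_next : d ≠ P.nextC m c := by
    rintro rfl
    exact hd (hst.apply_eq_none hnext)
  have hd_src : d ≠ c := by
    rintro rfl
    have hsd : s d = some m := (hst d hd).symm.trans hc
    exact hs _ ⟨m, d, hm, hsd, htg, hst.apply_eq_none hnext, rfl⟩
  rw [Function.update_of_ne hd_next, Function.update_of_ne hd_src, hst d hd]

theorem recvStep (hs : ∀ u, ¬ P.recvStep s u) (hst : P.Extends s t) (h : P.recvStep t t') :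
    P.Extends s t' := by
  obtain ⟨m, c, hm, hc, htg, rfl⟩ := h
  intro d hd
  have hd_src : d ≠ c := by
    rintro rfl
    exact hs _ ⟨m, d, hm, (hst d hd).symm.trans hc, htg, rfl⟩
  rw [Function.update_of_ne hd_src, hst d hd]

theorem step (hs : ∀ u, ¬ P.stepPR s u) (hst : P.Extends s t) (h : P.step t t') :
    P.Extends s t' := by
  rcases h with (h | h | h) | ⟨rfl, -⟩
  · exact hst.sendStep h
  · exact hst.procStep (fun u hu => hs u (Or.inl hu)) h
  · exact hst.recvStep (fun u hu => hs u (Or.inr hu)) h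
  · exact hst

end PSN.Extends

theorem stmt17_general (P : PSN) (s : P.State)
    (h2 : ∀ s', ¬ P.stepPR s s') :
    ∀ s', Relation.ReflTransGen P.step s s' →
      ∀ c, s c ≠ none → s' c = s c := by
  intro s' hss'
  induction hss' with
  | refl => exact fun _ _ => rfl
  | tail _ hstep ih => exact PSN.Extends.step h2 ih hstep

/-- If some channel is nonempty and no process or receive step is enabled,
then along every execution every channel that is nonempty keeps its content:
a weak deadlock persists forever on its blocked channels. -/
theorem stmt17 (P : PSN) (s : P.State)
    (h1 : ∃ c, s c ≠ none) (h2 : ∀ s', ¬ P.stepPR s s') :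
    ∀ s', Relation.ReflTransGen P.step s s' →
      ∀ c, s c ≠ none → s' c = s c :=
  stmt17_general P s h2
end
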